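/- arXiv:2402.03141 — 3 statements merged into one kernel-verified Lean document; each statement's English description precedes it below -/
import Mathlib

section
/- Consider a finite Markov decision process with discount factor γ ∈ (0,1), reward function R bounded, a policy π, and value functions V^π, Q^π. Let b be a stochastic kernel from states x to auxiliary states x^τ, and let V^τ, Q^τ be value and Q-functions of an auxiliary policy π^τ satisfying the Bellman consistency V^τ(x^τ) = E_{a∼π^τ(·|x^τ)}[Q^τ(x^τ,a)] and the reward-matching condition R(x,a) = E_{x^τ∼b(·|x)}[R^τ(x^τ,a)] together with the kernel-commutation property E_{x^τ'∼P^τ(·|x^τ,a), x^τ∼b(·|x)}[f(x^τ')] = E_{x^τ'∼b(·|x'), x'∼P(·|x,a)}[f(x^τ')] for all bounded f. Then for every state x₀, E_{x^τ∼b(·|x₀)}[V^τ(x^τ)] − V^π(x₀) = (1/(1−γ)) · E_{x̂ ∼ d^π_{x₀}, a∼π(·|x̂), x̂^τ∼b(·|x̂)}[V^τ(x̂^τ) − Q^τ(x̂^τ, a)], where d^π_{x₀} is the normalized discounted visitation distribution (1−γ)·Σ_{t≥0} γ^t P^π_t(·|x₀). -/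
open scoped ENNReal

/-- Expectation of a real-valued function under a `PMF` on a finite type. -/
noncomputable def Epmf {α : Type*} [Fintype α] (μ : PMF α) (f : α → ℝ) : ℝ :=
  ∑ a, (μ a).toReal * f a

lemma Epmf_total {α : Type*} [Fintype α] (μ : PMF α) : ∑ a, (μ a).toReal = 1 := by
  have h := μ.tsum_coe
  rw [tsum_fintype] at h
  rw [← ENNReal.toReal_sum (fun a _ => μ.apply_ne_top a), h, ENNReal.toReal_one]

lemma Epmf_const {α : Type*} [Fintype α] (μ : PMF α) (c : ℝ) :
    Epmf μ (fun _ => c) = c := by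
  simp only [Epmf, ← Finset.sum_mul, Epmf_total, one_mul]

lemma Epmf_sub {α : Type*} [Fintype α] (μ : PMF α) (f g : α → ℝ) :
    Epmf μ (fun a => f a - g a) = Epmf μ f - Epmf μ g := by
  simp [Epmf, mul_sub, Finset.sum_sub_distrib]

lemma Epmf_add {α : Type*} [Fintype α] (μ : PMF α) (f g : α → ℝ) :
    Epmf μ (fun a => f a + g a) = Epmf μ f + Epmf μ g := by
  simp [Epmf, mul_add, Finset.sum_add_distrib]

lemma Epmf_mul_left {α : Type*} [Fintype α] (μ : PMF α) (c : ℝ) (f : α → ℝ) :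
    Epmf μ (fun a => c * f a) = c * Epmf μ f := by
  simp only [Epmf, Finset.mul_sum]; congr 1; ext a; ring

lemma Epmf_congr {α : Type*} [Fintype α] (μ : PMF α) {f g : α → ℝ}
    (h : ∀ a, f a = g a) : Epmf μ f = Epmf μ g := by
  simp [Epmf, funext h]

lemma Epmf_abs_le {α : Type*} [Fintype α] (μ : PMF α) (f : α → ℝ) (M : ℝ)
    (h : ∀ a, |f a| ≤ M) : |Epmf μ f| ≤ M := by
  calc |Epmf μ f| ≤ ∑ a, |(μ a).toReal * f a| := Finset.abs_sum_le_sum_abs _ _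
    _ = ∑ a, (μ a).toReal * |f a| := by
        refine Finset.sum_congr rfl fun a _ => ?_
        rw [abs_mul, abs_of_nonneg ENNReal.toReal_nonneg]
    _ ≤ ∑ a, (μ a).toReal * M := by
        refine Finset.sum_le_sum fun a _ => ?_
        exact mul_le_mul_of_nonneg_left (h a) ENNReal.toReal_nonneg
    _ = M := by rw [← Finset.sum_mul, Epmf_total, one_mul]

/-- A γ-contractive fixed point equation forces the function to vanish. -/
lemma Epmf_contraction_zero {X A : Type*} [Fintype X] [Fintype A]
    {γ : ℝ} (hγ0 : 0 ≤ γ) (hγ1 : γ < 1)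
    (π : X → PMF A) (P : X → A → PMF X) (h : X → ℝ)
    (hfix : ∀ x, h x = γ * Epmf (π x) (fun a => Epmf (P x a) h)) :
    ∀ x, h x = 0 := by
  intro x
  obtain ⟨z, _, hz⟩ := Finset.exists_max_image Finset.univ (fun y => |h y|)
    ⟨x, Finset.mem_univ x⟩
  have hle : ∀ y, |h y| ≤ |h z| := fun y => hz y (Finset.mem_univ y)
  have hzle : |h z| ≤ γ * |h z| := by
    calc |h z| = |γ * Epmf (π z) (fun a => Epmf (P z a) h)| := by rw [← hfix]
      _ = γ * |Epmf (π z) (fun a => Epmf (P z a) h)| := by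
          rw [abs_mul, abs_of_nonneg hγ0]
      _ ≤ γ * |h z| := by
          refine mul_le_mul_of_nonneg_left ?_ hγ0
          exact Epmf_abs_le _ _ _ (fun a => Epmf_abs_le _ _ _ hle)
  have hz0 : |h z| = 0 := by nlinarith [abs_nonneg (h z)]
  have := hle x
  rw [hz0] at this
  exact abs_eq_zero.mp (le_antisymm this (abs_nonneg _))

/-- General delayed performance difference identity: for two finite MDPs linked by
a belief kernel `b` (with matching rewards and commuting transitions), the gap between
the belief-averaged auxiliary value function and the original value function equals
`1/(1-γ)` times the discounted-visitation average of the advantage-like gap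
`Vτ(x̂τ) - Qτ(x̂τ, a)`. -/
theorem general_delayed_performance_difference
    {X Xτ A : Type*} [Fintype X] [Fintype Xτ] [Fintype A]
    (γ : ℝ) (hγ0 : 0 < γ) (hγ1 : γ < 1)
    (π : X → PMF A) (πτ : Xτ → PMF A)
    (P : X → A → PMF X) (Pτ : Xτ → A → PMF Xτ) (b : X → PMF Xτ)
    (R : X → A → ℝ) (Rτ : Xτ → A → ℝ)
    (V : X → ℝ) (Vτ : Xτ → ℝ) (Qτ : Xτ → A → ℝ)
    (d : X → PMF X)
    -- Bellman equation for the original value function of policy π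
    (hV : ∀ x, V x = Epmf (π x) (fun a => R x a + γ * Epmf (P x a) V))
    -- Bellman consistency for the auxiliary value function of policy πτ
    (hVτ : ∀ xτ, Vτ xτ = Epmf (πτ xτ) (fun a => Qτ xτ a))
    -- Bellman equation for the auxiliary Q-function
    (hQτ : ∀ xτ a, Qτ xτ a = Rτ xτ a + γ * Epmf (Pτ xτ a) Vτ)
    -- reward-matching condition
    (hR : ∀ x a, R x a = Epmf (b x) (fun xτ => Rτ xτ a))
    -- kernel-commutation property
    (hcomm : ∀ x a (f : Xτ → ℝ),
      Epmf (b x) (fun xτ => Epmf (Pτ xτ a) f)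
        = Epmf (P x a) (fun x' => Epmf (b x') f))
    -- `d x₀` is the normalized discounted visitation distribution starting from x₀
    (hd : ∀ x₀ (f : X → ℝ),
      Epmf (d x₀) f
        = (1 - γ) * f x₀
          + γ * Epmf (π x₀) (fun a => Epmf (P x₀ a) (fun x' => Epmf (d x') f))) :
    ∀ x₀ : X,
      Epmf (b x₀) Vτ - V x₀
        = (1 / (1 - γ)) *
            Epmf (d x₀) (fun xhat =>
              Epmf (π xhat) (fun a =>
                Epmf (b xhat) (fun xτ => Vτ xτ - Qτ xτ a))) := by
  intro x₀
  set F : X → ℝ := fun xhat =>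
    Epmf (π xhat) (fun a => Epmf (b xhat) (fun xτ => Vτ xτ - Qτ xτ a)) with hF
  -- Step 1: one-step expansion of the gap g x = Epmf (b x) Vτ - V x.
  have key : ∀ x a, Epmf (b x) (fun xτ => Vτ xτ - Qτ xτ a)
      = Epmf (b x) Vτ - R x a - γ * Epmf (P x a) (fun x' => Epmf (b x') Vτ) := by
    intro x a
    have h1 : Epmf (b x) (fun xτ => Qτ xτ a)
        = R x a + γ * Epmf (P x a) (fun x' => Epmf (b x') Vτ) := by
      have e1 : Epmf (b x) (fun xτ => Qτ xτ a)
          = Epmf (b x) (fun xτ => Rτ xτ a + γ * Epmf (Pτ xτ a) Vτ) :=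
        Epmf_congr _ (fun xτ => by rw [hQτ])
      rw [e1, Epmf_add, Epmf_mul_left, hcomm, ← hR]
    rw [Epmf_sub, h1]; ring
  have stepA : ∀ x, Epmf (b x) Vτ - V x
      = F x + γ * Epmf (π x)
          (fun a => Epmf (P x a) (fun x' => Epmf (b x') Vτ - V x')) := by
    intro x
    have rhs_eq : F x + γ * Epmf (π x)
          (fun a => Epmf (P x a) (fun x' => Epmf (b x') Vτ - V x'))
        = Epmf (π x) (fun a => Epmf (b x) Vτ - (R x a + γ * Epmf (P x a) V)) := by
      rw [hF, ← Epmf_mul_left, ← Epmf_add]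
      refine Epmf_congr _ (fun a => ?_)
      rw [key x a, Epmf_sub]; ring
    rw [rhs_eq, Epmf_sub (π x) (fun _ => Epmf (b x) Vτ)
      (fun a => R x a + γ * Epmf (P x a) V), Epmf_const, ← hV]
  -- Step 2: the defect function h satisfies a γ-contractive fixed point equation.
  set h : X → ℝ := fun x => Epmf (d x) F - (1 - γ) * (Epmf (b x) Vτ - V x) with hh
  have stepB : ∀ x, h x = γ * Epmf (π x) (fun a => Epmf (P x a) h) := by
    intro x
    have inner : ∀ a, Epmf (P x a) h
        = Epmf (P x a) (fun x' => Epmf (d x') F)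
          - (1 - γ) * Epmf (P x a) (fun x' => Epmf (b x') Vτ - V x') := by
      intro a
      rw [hh, Epmf_sub (P x a) (fun x' => Epmf (d x') F)
        (fun x' => (1 - γ) * (Epmf (b x') Vτ - V x')), Epmf_mul_left]
    have outer : Epmf (π x) (fun a => Epmf (P x a) h)
        = Epmf (π x) (fun a => Epmf (P x a) (fun x' => Epmf (d x') F))
          - (1 - γ) * Epmf (π x)
              (fun a => Epmf (P x a) (fun x' => Epmf (b x') Vτ - V x')) := by
      rw [Epmf_congr _ inner, Epmf_sub, Epmf_mul_left]
    rw [hh]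
    simp only
    rw [hd x F, stepA x, outer]
    ring
  have hzero := Epmf_contraction_zero (le_of_lt hγ0) hγ1 π P h stepB
  have h0 : Epmf (d x₀) F - (1 - γ) * (Epmf (b x₀) Vτ - V x₀) = 0 := hzero x₀
  have hne : (1 : ℝ) - γ ≠ 0 := by linarith
  rw [show Epmf (d x₀) F = (1 - γ) * (Epmf (b x₀) Vτ - V x₀) from by linarith]
  field_simp
end

section
/- Let Q^τ : X^τ × A → ℝ be bounded, b a kernel from X to X^τ, and for policies π on X define J_x(π) = E_{x^τ∼b(·|x), a∼π(·|x)}[log π(a|x) − Q^τ(x^τ,a)]. Suppose π_new minimizes J_x over a policy class Π containing π_old, so J_x(π_new) ≤ J_x(π_old) for all x. Define Q_μ(x,a) = R(x,a) + γ E_{x'∼P(·|x,a)}[E_{x^τ'∼b(·|x'), a'∼μ(·|x')}[Q^τ(x^τ',a') − log μ(a'|x')]] for a policy μ. Then Q_old(x,a) ≤ Q_new(x,a) for all (x,a), where Q_old = Q_{π_old} and Q_new = Q_{π_new}. -/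
open scoped ENNReal

/-- Soft policy improvement: if `π_new` achieves a value of the KL-style objective
`J_x(π) = E_{xτ∼b(·|x), a∼π(·|x)}[log π(a|x) − Qτ(xτ,a)]` no larger than `π_old` at every
state, then the corresponding soft Q-functions satisfy `Q_old(x,a) ≤ Q_new(x,a)`
everywhere, where
`Q_μ(x,a) = R(x,a) + γ E_{x'∼P(·|x,a)}[E_{xτ'∼b(·|x'), a'∼μ(·|x')}[Qτ(xτ',a') − log μ(a'|x')]]`. -/
theorem soft_policy_improvement
    {X Xτ A : Type*} [Fintype X] [Fintype Xτ] [Fintype A]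
    (γ : ℝ) (hγ0 : 0 < γ) (hγ1 : γ < 1)
    (P : X → A → PMF X) (b : X → PMF Xτ)
    (R : X → A → ℝ) (Qτ : Xτ → A → ℝ)
    (πold πnew : X → PMF A)
    (hsuppold : ∀ (x : X) (a : A), πold x a ≠ 0)
    (hsuppnew : ∀ (x : X) (a : A), πnew x a ≠ 0)
    -- π_new improves the objective J_x at every state
    (hJ : ∀ x : X,
      Epmf (b x) (fun xτ => Epmf (πnew x) (fun a =>
        Real.log ((πnew x a).toReal) - Qτ xτ a))
        ≤ Epmf (b x) (fun xτ => Epmf (πold x) (fun a =>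
            Real.log ((πold x a).toReal) - Qτ xτ a))) :
    ∀ (x : X) (a : A),
      R x a + γ * Epmf (P x a) (fun x' =>
          Epmf (b x') (fun xτ' => Epmf (πold x') (fun a' =>
            Qτ xτ' a' - Real.log ((πold x' a').toReal))))
        ≤ R x a + γ * Epmf (P x a) (fun x' =>
            Epmf (b x') (fun xτ' => Epmf (πnew x') (fun a' =>
              Qτ xτ' a' - Real.log ((πnew x' a').toReal)))) := by
  intro x a
  have key : ∀ x' : X,
      Epmf (b x') (fun xτ' => Epmf (πold x') (fun a' =>
        Qτ xτ' a' - Real.log ((πold x' a').toReal)))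
      ≤ Epmf (b x') (fun xτ' => Epmf (πnew x') (fun a' =>
        Qτ xτ' a' - Real.log ((πnew x' a').toReal))) := by
    intro x'
    have h := hJ x'
    have negold : ∀ (π : X → PMF A),
        Epmf (b x') (fun xτ => Epmf (π x') (fun a =>
          Real.log ((π x' a).toReal) - Qτ xτ a))
        = - Epmf (b x') (fun xτ => Epmf (π x') (fun a =>
          Qτ xτ a - Real.log ((π x' a).toReal))) := by
      intro π
      simp only [Epmf, ← Finset.sum_neg_distrib]
      refine Finset.sum_congr rfl fun xτ _ => ?_
      rw [← mul_neg, ← Finset.sum_neg_distrib]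
      refine congrArg _ (Finset.sum_congr rfl fun a _ => ?_)
      ring
    rw [negold πnew, negold πold, neg_le_neg_iff] at h
    exact h
  have hE : Epmf (P x a) (fun x' =>
        Epmf (b x') (fun xτ' => Epmf (πold x') (fun a' =>
          Qτ xτ' a' - Real.log ((πold x' a').toReal))))
      ≤ Epmf (P x a) (fun x' =>
        Epmf (b x') (fun xτ' => Epmf (πnew x') (fun a' =>
          Qτ xτ' a' - Real.log ((πnew x' a').toReal)))) := by
    refine Finset.sum_le_sum fun x' _ => ?_
    exact mul_le_mul_of_nonneg_left (key x') ENNReal.toReal_nonneg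
  have := mul_le_mul_of_nonneg_left hE hγ0.le
  linarith
end

section
/- In the 1-dimensional Gaussian MDP with state space ℝ, action space ℝ, transition s' = s + a/L_π + ε with ε ∼ N(0, σ²), and reward R(s,a) = −L_Q L_π |s + a/L_π|, the expected absolute value of a sum of Δ i.i.d. N(0,σ²) noises satisfies E|ε₁ + ⋯ + ε_Δ| = σ√(2Δ/π). Consequently any policy that must commit to actions based on information Δ steps old incurs per-step expected reward at most −L_Q L_π σ √(2Δ/π), giving the value function upper bound V^π(x) ≤ −(L_Q L_π/(1−γ)) · σ√(2Δ)/√π. -/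
open MeasureTheory ProbabilityTheory
open scoped ENNReal NNReal

/-!
The sum of `Δ` independent `N(0, σ²)` variables is `N(0, Δσ²)`, by induction from the stability
of Gaussians under independent addition. For `X ∼ N(0, v)` the density is even, so
`E|X| = 2 ∫₀^∞ x e^{-x²/2v} dx / √(2πv) = √(2v/π)`. Bounding every reward by `-C` bounds the
discounted value by the geometric series `-C / (1 - γ)`.
-/

open Real Set Finset

lemma integral_Ioi_mul_exp_neg_mul_sq {b : ℝ} (hb : 0 < b) :
    ∫ x in Ioi (0 : ℝ), x * exp (-b * x ^ 2) = (2 * b)⁻¹ := by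
  have h := integral_mul_cexp_neg_mul_sq (b := (b : ℂ)) (by simpa using hb)
  rw [← Complex.ofReal_inj, ← integral_complex_ofReal]
  push_cast
  exact h

lemma integral_abs_gaussianReal (v : ℝ≥0) :
    ∫ x, |x| ∂gaussianReal 0 v = √(2 * v / π) := by
  rcases eq_or_ne v 0 with rfl | hv
  · simp [gaussianReal_zero_var]
  have hv' : (0 : ℝ) < v := by positivity
  have hdensity (x : ℝ) : gaussianPDFReal 0 v x • |x|
      = (√(2 * π * v))⁻¹ * (|x| * exp (-(2 * v : ℝ)⁻¹ * |x| ^ 2)) := by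
    rw [gaussianPDFReal, smul_eq_mul, sq_abs, sub_zero, neg_div, neg_mul, div_eq_inv_mul]
    ring
  rw [integral_gaussianReal_eq_integral_smul hv]
  simp_rw [hdensity]
  rw [integral_const_mul, integral_comp_abs (f := fun x => x * exp (-(2 * v : ℝ)⁻¹ * x ^ 2)),
    integral_Ioi_mul_exp_neg_mul_sq (by positivity)]
  rw [show 2 * (v : ℝ) / π = (2 * v) ^ 2 / (2 * π * v) by field_simp,
    sqrt_div (sq_nonneg _), sqrt_sq (by positivity)]
  field_simp

lemma map_sum_eq_gaussianReal {ι Ω : Type*} [MeasurableSpace Ω] {P : Measure Ω}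
    [IsProbabilityMeasure P] {X : ι → Ω → ℝ} {m : ι → ℝ} {v : ι → ℝ≥0}
    (hindep : iIndepFun X P) (hX : ∀ i, P.map (X i) = gaussianReal (m i) (v i)) (s : Finset ι) :
    P.map (fun ω => ∑ i ∈ s, X i ω) = gaussianReal (∑ i ∈ s, m i) (∑ i ∈ s, v i) := by
  classical
  have hmeas (i : ι) : AEMeasurable (X i) P :=
    AEMeasurable.of_map_ne_zero (by simp [hX i, NeZero.ne])
  induction s using Finset.induction_on with
  | empty => simp [gaussianReal_zero_var]
  | insert a s has ih =>
    have hindep' : IndepFun (X a) (fun ω => ∑ i ∈ s, X i ω) P := by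
      simpa [Finset.sum_fn] using (hindep.indepFun_finsetSum_of_notMem₀ hmeas has).symm
    simp_rw [Finset.sum_insert has]
    exact gaussianReal_add_gaussianReal_of_indepFun hindep' (hX a) ih

lemma tsum_geometric_mul_le {γ c : ℝ} {r : ℕ → ℝ} (hγ0 : 0 ≤ γ) (hγ1 : γ < 1)
    (hsum : Summable fun t => γ ^ t * r t) (hr : ∀ t, r t ≤ c) :
    ∑' t, γ ^ t * r t ≤ c / (1 - γ) := calc
  ∑' t, γ ^ t * r t ≤ ∑' t, γ ^ t * c :=
    hsum.tsum_le_tsum (fun t => mul_le_mul_of_nonneg_left (hr t) (pow_nonneg hγ0 t))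
      ((summable_geometric_of_lt_one hγ0 hγ1).mul_right c)
  _ = c / (1 - γ) := by rw [tsum_mul_right, tsum_geometric_of_lt_one hγ0 hγ1, inv_mul_eq_div]

theorem gaussian_delay_value_upper_bound_general
    (Δ : ℕ) (σ : ℝ) (hσ : 0 < σ)
    (LQ Lπ γ : ℝ) (hγ0 : 0 < γ) (hγ1 : γ < 1)
    -- Δ i.i.d. N(0, σ²) noises on a probability space (Ω, P)
    {Ω : Type*} [MeasurableSpace Ω] (P : Measure Ω) [IsProbabilityMeasure P]
    (ε : Fin Δ → Ω → ℝ)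
    (hindep : iIndepFun ε P)
    (hgauss : ∀ i, P.map (ε i) = gaussianReal 0 (σ.toNNReal ^ 2))
    -- delayed value: discounted sum of per-step expected rewards r t
    (V : ℝ) (r : ℕ → ℝ)
    (hsum : Summable (fun t => γ ^ t * r t))
    (hV : V = ∑' t, γ ^ t * r t)
    (hr : ∀ t, r t ≤ -(LQ * Lπ * σ * Real.sqrt (2 * Δ / Real.pi))) :
    (∫ ω, |∑ i, ε i ω| ∂P = σ * Real.sqrt (2 * Δ / Real.pi)) ∧
    V ≤ -(LQ * Lπ / (1 - γ)) * σ * Real.sqrt (2 * Δ) / Real.sqrt Real.pi := by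
  have hlaw : P.map (fun ω => ∑ i, ε i ω) = gaussianReal 0 (Δ * σ.toNNReal ^ 2) := by
    simpa using map_sum_eq_gaussianReal hindep hgauss univ
  have hmeas : AEMeasurable (fun ω => ∑ i, ε i ω) P :=
    AEMeasurable.of_map_ne_zero (by simp [hlaw, NeZero.ne])
  constructor
  · rw [← integral_map hmeas continuous_abs.aestronglyMeasurable, hlaw,
      integral_abs_gaussianReal]
    push_cast
    rw [Real.coe_toNNReal _ hσ.le, show 2 * (Δ * σ ^ 2) / π = σ ^ 2 * (2 * Δ / π) by ring,
      sqrt_mul (sq_nonneg σ), sqrt_sq hσ.le]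
  · rw [hV]
    refine (tsum_geometric_mul_le hγ0.le hγ1 hsum hr).trans_eq ?_
    rw [sqrt_div (by positivity)]
    ring

/-- Gaussian absolute-moment identity and the resulting delayed value upper bound:
the expected absolute value of a sum of `Δ` i.i.d. `N(0,σ²)` noises is `σ√(2Δ/π)`;
consequently, if every per-step expected reward of a `Δ`-delayed policy is at most
`−L_Q L_π σ √(2Δ/π)` and the value is the discounted sum of these rewards, then
`V ≤ −(L_Q L_π/(1−γ)) · σ√(2Δ)/√π`. -/
theorem gaussian_delay_value_upper_bound
    (Δ : ℕ) (hΔ : 0 < Δ) (σ : ℝ) (hσ : 0 < σ)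
    (LQ Lπ γ : ℝ) (hLQ : 0 < LQ) (hLπ : 0 < Lπ) (hγ0 : 0 < γ) (hγ1 : γ < 1)
    -- Δ i.i.d. N(0, σ²) noises on a probability space (Ω, P)
    {Ω : Type*} [MeasurableSpace Ω] (P : Measure Ω) [IsProbabilityMeasure P]
    (ε : Fin Δ → Ω → ℝ)
    (hmeas : ∀ i, Measurable (ε i))
    (hindep : iIndepFun ε P)
    (hgauss : ∀ i, P.map (ε i) = gaussianReal 0 (σ.toNNReal ^ 2))
    -- delayed value: discounted sum of per-step expected rewards r t
    (V : ℝ) (r : ℕ → ℝ)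
    (hsum : Summable (fun t => γ ^ t * r t))
    (hV : V = ∑' t, γ ^ t * r t)
    (hr : ∀ t, r t ≤ -(LQ * Lπ * σ * Real.sqrt (2 * Δ / Real.pi))) :
    (∫ ω, |∑ i, ε i ω| ∂P = σ * Real.sqrt (2 * Δ / Real.pi)) ∧
    V ≤ -(LQ * Lπ / (1 - γ)) * σ * Real.sqrt (2 * Δ) / Real.sqrt Real.pi :=
  gaussian_delay_value_upper_bound_general Δ σ hσ LQ Lπ γ hγ0 hγ1 P ε hindep hgauss V r hsum hV hr
end
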